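/- arXiv:2111.12501 — 5 statements merged into one kernel-verified Lean document; each statement's English description precedes it below -/
import Mathlib

section
/- Let π: (M,∇) → (B,∇*) be a conformal submersion with horizontal distribution, with fundamental tensors T and A. For vertical vector fields U, V, W on M: V(R(U,V)W) = R^{VVV}(U,V)W + T_V T_U W − T_U T_V W, where R is the curvature tensor of ∇ and R^{VVV}(U,V)W = V∇_{[U,V]}VW − V∇_U(V∇_V VW) + V∇_V(V∇_U VW). -/
/-!  Abstract framework for (conformal) submersions with horizontal
distribution, following Abe–Hasegawa.  Vector fields on the manifold `M`
(resp. `B`) are modeled by an abstract type `VM` (resp. `VB`) which is a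
module over the ring `M → ℝ` (resp. `B → ℝ`) of (smooth) functions. -/

/-- An affine connection on a module `V` of vector fields over the ring `R`
of functions, with directional derivative `d`. -/
structure Conn (R V : Type*) [CommRing R] [AddCommGroup V] [Module R V]
    (d : V → R → R) : Type _ where
  cov : V → V → V
  add_right : ∀ X Y Z, cov X (Y + Z) = cov X Y + cov X Z
  add_left : ∀ X Y Z, cov (X + Y) Z = cov X Z + cov Y Z
  smul_left : ∀ (f : R) (X Y : V), cov (f • X) Y = f • cov X Y
  leibniz : ∀ (f : R) (X Y : V), cov X (f • Y) = d X f • Y + f • cov X Y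

/-- Abstract calculus of vector fields for a surjective submersion
`π : M → B` with horizontal distribution `H` (the `gm`-orthogonal complement
of the vertical distribution `ker π₊`). -/
structure SubmersionCalc (M B VM VB : Type*) [AddCommGroup VM]
    [Module (M → ℝ) VM] [AddCommGroup VB] [Module (B → ℝ) VB] : Type _ where
  π : M → B
  π_surj : Function.Surjective π
  /-- `dM X f` is the derivative `X(f)` of `f : M → ℝ` along the field `X`. -/
  dM : VM → (M → ℝ) → (M → ℝ)
  dM_add : ∀ X Y f, dM (X + Y) f = dM X f + dM Y f
  dM_smul : ∀ (g : M → ℝ) X f, dM (g • X) f = g * dM X f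
  dM_mul : ∀ X f g, dM X (f * g) = dM X f * g + f * dM X g
  dB : VB → (B → ℝ) → (B → ℝ)
  /-- Lie bracket of vector fields on `M` -/
  bracketM : VM → VM → VM
  /-- Lie bracket of vector fields on `B` -/
  bracketB : VB → VB → VB
  /-- horizontal projection -/
  H : VM →ₗ[M → ℝ] VM
  /-- vertical projection -/
  V : VM →ₗ[M → ℝ] VM
  H_add_V : ∀ E, H E + V E = E
  H_idem : ∀ E, H (H E) = H E
  V_idem : ∀ E, V (V E) = V E
  H_V : ∀ E, H (V E) = 0
  V_H : ∀ E, V (H E) = 0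
  /-- the (unique) horizontal lift of vector fields on `B` -/
  lift : VB → VM
  lift_add : ∀ X Y, lift (X + Y) = lift X + lift Y
  lift_smul : ∀ (f : B → ℝ) X, lift (f • X) = (f ∘ π) • lift X
  lift_horizontal : ∀ X, H (lift X) = lift X
  /-- the pushforward `π₊` (on projectable fields) -/
  proj : VM → VB
  proj_lift : ∀ X, proj (lift X) = X
  proj_vert : ∀ E, proj (V E) = 0
  proj_add : ∀ E F, proj (E + F) = proj E + proj F
  proj_smul : ∀ (f : B → ℝ) E, proj ((f ∘ π) • E) = f • proj E
  dM_lift : ∀ X (f : B → ℝ), dM (lift X) (f ∘ π) = dB X f ∘ π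
  proj_bracket : ∀ X Y, proj (bracketM (lift X) (lift Y)) = bracketB X Y
  H_bracket_lift : ∀ X Y, H (bracketM (lift X) (lift Y)) = lift (bracketB X Y)
  /-- Riemannian metric on `M` -/
  gm : VM → VM → (M → ℝ)
  gm_symm : ∀ E F, gm E F = gm F E
  gm_addl : ∀ E F G, gm (E + F) G = gm E G + gm F G
  gm_smul : ∀ (f : M → ℝ) E F, gm (f • E) F = f * gm E F
  /-- Riemannian metric on `B` -/
  gb : VB → VB → (B → ℝ)
  gb_symm : ∀ X Y, gb X Y = gb Y X
  /-- the horizontal distribution is the orthogonal complement of the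
  vertical one -/
  horiz_vert_orth : ∀ E F, gm (H E) (V F) = 0

namespace SubmersionCalc

variable {M B VM VB : Type*} [AddCommGroup VM] [Module (M → ℝ) VM]
  [AddCommGroup VB] [Module (B → ℝ) VB] (S : SubmersionCalc M B VM VB)

/-- torsion-freeness of a connection on `M` -/
def TorsionFreeM (D : Conn (M → ℝ) VM S.dM) : Prop :=
  ∀ E F, D.cov E F - D.cov F E = S.bracketM E F

/-- torsion-freeness of a connection on `B` -/
def TorsionFreeB (D' : Conn (B → ℝ) VB S.dB) : Prop :=
  ∀ X Y, D'.cov X Y - D'.cov Y X = S.bracketB X Y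

/-- the fundamental tensor `T` -/
def T (D : Conn (M → ℝ) VM S.dM) (E F : VM) : VM :=
  S.H (D.cov (S.V E) (S.V F)) + S.V (D.cov (S.V E) (S.H F))

/-- the fundamental tensor `A` -/
def A (D : Conn (M → ℝ) VM S.dM) (E F : VM) : VM :=
  S.V (D.cov (S.H E) (S.H F)) + S.H (D.cov (S.H E) (S.V F))

/-- the curvature tensor, with the sign convention
`R(E,F)G = D_{[E,F]}G − D_ED_F G + D_FD_E G` -/
def Rm (D : Conn (M → ℝ) VM S.dM) (E F G : VM) : VM :=
  D.cov (S.bracketM E F) G - D.cov E (D.cov F G) + D.cov F (D.cov E G)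

end SubmersionCalc

/-- `π` is a conformal submersion with dilation `φ`:
`g_m(X̃,Ỹ) = e^{2φ} g_b(X,Y) ∘ π` for horizontal lifts; `gradφ` is the
`g_m`-gradient of `φ`. -/
structure ConformalData {M B VM VB : Type*} [AddCommGroup VM]
    [Module (M → ℝ) VM] [AddCommGroup VB] [Module (B → ℝ) VB]
    (S : SubmersionCalc M B VM VB) : Type _ where
  φ : M → ℝ
  conformal : ∀ X Y : VB,
    S.gm (S.lift X) (S.lift Y) = fun p => Real.exp (2 * φ p) * S.gb X Y (S.π p)
  gradφ : VM
  grad_eq : ∀ E : VM, S.gm E gradφ = S.dM E φ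

/-- `π : (M,D) → (B,D')` is a conformal submersion with horizontal
distribution:
`H(D_{X̃}Ỹ) = (D'_X Y)~ + X̃(φ)Ỹ + Ỹ(φ)X̃ − g_m(X̃,Ỹ)·H(grad φ)`. -/
def IsCSHD {M B VM VB : Type*} [AddCommGroup VM] [Module (M → ℝ) VM]
    [AddCommGroup VB] [Module (B → ℝ) VB]
    (S : SubmersionCalc M B VM VB) (C : ConformalData S)
    (D : Conn (M → ℝ) VM S.dM) (D' : Conn (B → ℝ) VB S.dB) : Prop :=
  ∀ X Y : VB,
    S.H (D.cov (S.lift X) (S.lift Y))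
      = S.lift (D'.cov X Y) + S.dM (S.lift X) C.φ • S.lift Y
        + S.dM (S.lift Y) C.φ • S.lift X
        - S.gm (S.lift X) (S.lift Y) • S.H C.gradφ

/-- for vertical `U, V, W`,
`V(R(U,V)W) = R^{VVV}(U,V)W + T_V T_U W − T_U T_V W`. -/
theorem curvature_vertical_vertical_vertical
    {M B VM VB : Type*} [AddCommGroup VM] [Module (M → ℝ) VM]
    [AddCommGroup VB] [Module (B → ℝ) VB]
    (S : SubmersionCalc M B VM VB) (C : ConformalData S)
    (D : Conn (M → ℝ) VM S.dM) (D' : Conn (B → ℝ) VB S.dB)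
    (hCS : IsCSHD S C D D') :
    ∀ U V W : VM, S.V U = U → S.V V = V → S.V W = W →
      S.V (S.Rm D U V W)
        = (S.V (D.cov (S.bracketM (S.V U) (S.V V)) (S.V W))
            - S.V (D.cov (S.V U) (S.V (D.cov (S.V V) (S.V W))))
            + S.V (D.cov (S.V V) (S.V (D.cov (S.V U) (S.V W)))))
          + S.T D V (S.T D U W) - S.T D U (S.T D V W) := by

  intro U V W hU hV hW
  have covz : ∀ X : VM, D.cov X 0 = 0 := by
    intro X
    have h := D.add_right X 0 0
    simpa using h.symm
  have hHW : S.H W = 0 := by rw [← hW, S.H_V]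
  have hHU : S.H U = 0 := by rw [← hU, S.H_V]
  have hHV : S.H V = 0 := by rw [← hV, S.H_V]
  have hTU : S.T D U W = S.H (D.cov U W) := by
    simp [SubmersionCalc.T, hU, hW, hHW, covz]
  have hTV : S.T D V W = S.H (D.cov V W) := by
    simp [SubmersionCalc.T, hV, hW, hHW, covz]
  have hTVTU : S.T D V (S.T D U W) = S.V (D.cov V (S.H (D.cov U W))) := by
    simp [hTU, SubmersionCalc.T, hU, hV, hW, hHW, S.V_H, S.H_idem, covz]
  have hTUTV : S.T D U (S.T D V W) = S.V (D.cov U (S.H (D.cov V W))) := by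
    simp [hTV, SubmersionCalc.T, hU, hV, hW, hHW, S.V_H, S.H_idem, covz]
  have split : ∀ X Y : VM, S.V (D.cov X (D.cov Y W))
      = S.V (D.cov X (S.V (D.cov Y W))) + S.V (D.cov X (S.H (D.cov Y W))) := by
    intro X Y
    conv_lhs => rw [← S.H_add_V (D.cov Y W)]
    rw [D.add_right, map_add]
    abel
  rw [hTVTU, hTUTV, SubmersionCalc.Rm, hU, hV, hW]
  have e1 := split U V
  have e2 := split V U
  simp only [map_add, map_sub] at *
  rw [e1, e2]
  abel
end

section
/- Let π: (M,∇) → (B,∇*) be a conformal submersion with horizontal distribution, with fundamental tensors T and A. For horizontal vector fields X, Y, Z on M: H(R(X,Y)Z) = R^{HHH}(X,Y)Z + A_Y A_X Z − A_X A_Y Z, where R(E,F)G = ∇_{[E,F]}G − ∇_E∇_F G + ∇_F∇_E G and R^{HHH}(X,Y)Z = H∇_{[X,Y]}HZ − H∇_X(H∇_Y HZ) + H∇_Y(H∇_X HZ). -/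
/-- for horizontal `X, Y, Z`,
`H(R(X,Y)Z) = R^{HHH}(X,Y)Z + A_Y A_X Z − A_X A_Y Z`. -/
theorem curvature_horizontal_horizontal_horizontal
    {M B VM VB : Type*} [AddCommGroup VM] [Module (M → ℝ) VM]
    [AddCommGroup VB] [Module (B → ℝ) VB]
    (S : SubmersionCalc M B VM VB) (C : ConformalData S)
    (D : Conn (M → ℝ) VM S.dM) (D' : Conn (B → ℝ) VB S.dB)
    (hCS : IsCSHD S C D D') :
    ∀ X Y Z : VM, S.H X = X → S.H Y = Y → S.H Z = Z →
      S.H (S.Rm D X Y Z)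
        = (S.H (D.cov (S.bracketM (S.H X) (S.H Y)) (S.H Z))
            - S.H (D.cov (S.H X) (S.H (D.cov (S.H Y) (S.H Z))))
            + S.H (D.cov (S.H Y) (S.H (D.cov (S.H X) (S.H Z)))))
          + S.A D Y (S.A D X Z) - S.A D X (S.A D Y Z) := by
  intro X Y Z hX hY hZ
  have hVZ : S.V Z = 0 := by rw [← hZ, S.V_H]
  have cov_zero : ∀ E : VM, D.cov E 0 = 0 := by
    intro E
    have h := D.add_right E 0 0
    rw [add_zero] at h
    exact left_eq_add.mp h
  -- compute the A-terms
  have hAX : S.A D X Z = S.V (D.cov X Z) := by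
    simp [SubmersionCalc.A, hX, hZ, hVZ, cov_zero]
  have hAY : S.A D Y Z = S.V (D.cov Y Z) := by
    simp [SubmersionCalc.A, hY, hZ, hVZ, cov_zero]
  have hAYA : S.A D Y (S.A D X Z) = S.H (D.cov Y (S.V (D.cov X Z))) := by
    rw [hAX]; simp [SubmersionCalc.A, hY, S.H_V, S.V_idem, cov_zero]
  have hAXA : S.A D X (S.A D Y Z) = S.H (D.cov X (S.V (D.cov Y Z))) := by
    rw [hAY]; simp [SubmersionCalc.A, hX, S.H_V, S.V_idem, cov_zero]
  -- split covariant derivatives via H + V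
  have splitX : D.cov X (D.cov Y Z)
      = D.cov X (S.H (D.cov Y Z)) + D.cov X (S.V (D.cov Y Z)) := by
    rw [← D.add_right, S.H_add_V]
  have splitY : D.cov Y (D.cov X Z)
      = D.cov Y (S.H (D.cov X Z)) + D.cov Y (S.V (D.cov X Z)) := by
    rw [← D.add_right, S.H_add_V]
  rw [hAYA, hAXA, SubmersionCalc.Rm, hX, hY, hZ, map_add, map_sub,
    splitX, splitY, map_add, map_add]
  abel
end

section
/- Let π: (M,∇) → (B,∇*) be a conformal submersion with horizontal distribution, ∇ torsion-free, with fundamental tensors T and A. For horizontal X, Y and vertical U: V(R(X,Y)U) = R^{HHV}(X,Y)U + A_Y A_X U − A_X A_Y U, where R(E,F)G = ∇_{[E,F]}G − ∇_E∇_F G + ∇_F∇_E G. -/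
/-- for `∇` torsion-free, horizontal `X, Y` and vertical `U`,
`V(R(X,Y)U) = R^{HHV}(X,Y)U + A_Y A_X U − A_X A_Y U`. -/
theorem curvature_horizontal_horizontal_vertical
    {M B VM VB : Type*} [AddCommGroup VM] [Module (M → ℝ) VM]
    [AddCommGroup VB] [Module (B → ℝ) VB]
    (S : SubmersionCalc M B VM VB) (C : ConformalData S)
    (D : Conn (M → ℝ) VM S.dM) (D' : Conn (B → ℝ) VB S.dB)
    (hCS : IsCSHD S C D D')
    (htf : S.TorsionFreeM D) :
    ∀ X Y U : VM, S.H X = X → S.H Y = Y → S.V U = U →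
      S.V (S.Rm D X Y U)
        = (S.V (D.cov (S.bracketM (S.H X) (S.H Y)) (S.V U))
            - S.V (D.cov (S.H X) (S.V (D.cov (S.H Y) (S.V U))))
            + S.V (D.cov (S.H Y) (S.V (D.cov (S.H X) (S.V U)))))
          + S.A D Y (S.A D X U) - S.A D X (S.A D Y U) := by
  intro X Y U hX hY hU
  have cov_zero : ∀ E : VM, D.cov E 0 = 0 := by
    intro E
    have h := D.add_right E 0 0
    rw [add_zero] at h
    exact (left_eq_add.mp h)
  have hHU : S.H U = 0 := by rw [← hU, S.H_V]
  have AXU : S.A D X U = S.H (D.cov X U) := by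
    simp [SubmersionCalc.A, hX, hU, hHU, cov_zero]
  have AYU : S.A D Y U = S.H (D.cov Y U) := by
    simp [SubmersionCalc.A, hY, hU, hHU, cov_zero]
  have AYAXU : S.A D Y (S.A D X U) = S.V (D.cov Y (S.H (D.cov X U))) := by
    rw [AXU]
    simp [SubmersionCalc.A, hY, S.H_idem, S.V_H, cov_zero]
  have AXAYU : S.A D X (S.A D Y U) = S.V (D.cov X (S.H (D.cov Y U))) := by
    rw [AYU]
    simp [SubmersionCalc.A, hX, S.H_idem, S.V_H, cov_zero]
  have split : ∀ E F : VM, D.cov E F = D.cov E (S.V F) + D.cov E (S.H F) := by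
    intro E F
    rw [← D.add_right]
    congr 1
    rw [add_comm, S.H_add_V]
  rw [hX, hY, hU, AYAXU, AXAYU, SubmersionCalc.Rm,
    split X (D.cov Y U), split Y (D.cov X U)]
  simp only [map_add, map_sub]
  abel
end

section
/- Let π: (M,∇,g_m) → (B,∇*,g_b) be a conformal submersion with horizontal distribution, ∇ torsion-free, and E a vector field along a curve σ in M. Then the vertical part of the covariant derivative of E along σ satisfies V(E') = A_X H + T_U H + V(V'), where H = H(E), V = V(E), X = H(σ'), U = V(σ'). -/
/-- for a vector field `E` along a curve `σ` (modeled by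
extensions: `σ'` the tangent field, `E' = ∇_{σ'}E`), with `H = H(E)`,
`V = V(E)`, `X = H(σ')`, `U = V(σ')`:
`V(E') = A_X H + T_U H + V(V')`. -/
theorem vertical_part_of_derivative_along_curve
    {M B VM VB : Type*} [AddCommGroup VM] [Module (M → ℝ) VM]
    [AddCommGroup VB] [Module (B → ℝ) VB]
    (S : SubmersionCalc M B VM VB) (C : ConformalData S)
    (D : Conn (M → ℝ) VM S.dM) (D' : Conn (B → ℝ) VB S.dB)
    (hCS : IsCSHD S C D D')
    (htf : S.TorsionFreeM D)
    (σ' E : VM) :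
    S.V (D.cov σ' E)
      = S.A D (S.H σ') (S.H E) + S.T D (S.V σ') (S.H E)
        + S.V (D.cov σ' (S.V E)) := by
  have cov_zero : ∀ X : VM, D.cov X 0 = 0 := by
    intro X
    have h := D.add_right X 0 0
    rw [add_zero] at h
    have h2 : D.cov X 0 + D.cov X 0 = D.cov X 0 + 0 := by rw [add_zero, ← h]
    exact add_left_cancel h2
  unfold SubmersionCalc.A SubmersionCalc.T
  simp only [S.V_H, S.H_idem, S.V_idem, cov_zero, map_zero, add_zero, zero_add]
  have h1 : S.V (D.cov (S.H σ') (S.H E)) + S.V (D.cov (S.V σ') (S.H E))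
      = S.V (D.cov σ' (S.H E)) := by
    rw [← map_add, ← D.add_left, S.H_add_V]
  rw [h1, ← map_add, ← D.add_right, S.H_add_V]
end

section
/- Let π: (M,∇,g_m) → (B,∇*,g_b) be a conformal submersion with horizontal distribution (∇ torsion-free) and σ a curve in M with X = H(σ'), U = V(σ'). Then the vertical part of the acceleration satisfies V(σ'') = A_X X + T_U X + V(U'). -/
/-- for a curve `σ` (modeled by an extension `σ'` of its
tangent field, `σ'' = ∇_{σ'}σ'`), with `X = H(σ')`, `U = V(σ')`:
`V(σ'') = A_X X + T_U X + V(U')`. -/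
theorem vertical_acceleration_along_curve
    {M B VM VB : Type*} [AddCommGroup VM] [Module (M → ℝ) VM]
    [AddCommGroup VB] [Module (B → ℝ) VB]
    (S : SubmersionCalc M B VM VB) (C : ConformalData S)
    (D : Conn (M → ℝ) VM S.dM) (D' : Conn (B → ℝ) VB S.dB)
    (hCS : IsCSHD S C D D')
    (htf : S.TorsionFreeM D)
    (σ' : VM) :
    S.V (D.cov σ' σ')
      = S.A D (S.H σ') (S.H σ') + S.T D (S.V σ') (S.H σ')
        + S.V (D.cov σ' (S.V σ')) := by
  have cov0 : ∀ E : VM, D.cov E 0 = 0 := by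
    intro E
    have h := D.add_right E 0 0
    rw [add_zero] at h
    exact left_eq_add.mp h
  simp only [SubmersionCalc.A, SubmersionCalc.T, S.H_idem, S.V_idem, S.V_H, S.H_V,
    cov0, map_zero, add_zero, zero_add]
  have h1 : S.V (D.cov (S.H σ') (S.H σ')) + S.V (D.cov (S.V σ') (S.H σ'))
      = S.V (D.cov σ' (S.H σ')) := by
    rw [← map_add, ← D.add_left, S.H_add_V]
  rw [h1, ← map_add, ← D.add_right, S.H_add_V]
end
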